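/- Let k ≥ 2, let G_k be a 3-regular bipartite graph on 2k vertices with bipartition into independent sets A and B of size k, and let H_k, Ĝ_k, Ĥ_k be as constructed. The following are equivalent: (1) G_k has a Hamiltonian cycle; (2) there exists σ ∈ Res(G_k, H_k) with MMC(σ) ≤ 2, where MMC(σ) is the maximum degree of a vertex of the mismatch graph G_k^σ − H_k; (3) there exists a bijection π : V(Ĝ_k) → V(Ĥ_k) with MMC(π) ≤ 2, where MMC(π) is the maximum degree of a vertex of the mismatch graph Ĝ_k^π − Ĥ_k (equivalently, δ_1(Ĝ_k, Ĥ_k) = δ_{|1|}(Ĝ_k, Ĥ_k) ≤ 2, since for the ℓ_1-operator norm μ_1(G^π,H) = μ_{|1|}(G^π,H) = MMC(π)). -/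

import Mathlib

open SimpleGraph

section MismatchDefs

variable {V W : Type*}

/-- The mismatch graph `G^π − H`: the symmetric difference of the image of `G` under the
bijection `π` with `H`, as a graph on `V(H)`. Its edges are the positive edges
(edges of `G^π` not in `H`) together with the negative edges (edges of `H` not in `G^π`). -/
def mismatchGraph (G : SimpleGraph V) (H : SimpleGraph W) (π : V ≃ W) : SimpleGraph W :=
  symmDiff (G.map π.toEmbedding) H

/-- The degree of a vertex in the mismatch graph `G^π − H`. -/
noncomputable def mismatchDeg (G : SimpleGraph V) (H : SimpleGraph W) (π : V ≃ W) (x : W) : ℕ :=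
  ((mismatchGraph G H π).neighborSet x).ncard

/-- The number of positive edges of `G^π − H` incident to `x`. -/
noncomputable def posDeg (G : SimpleGraph V) (H : SimpleGraph W) (π : V ≃ W) (x : W) : ℕ :=
  ((G.map π.toEmbedding).neighborSet x \ H.neighborSet x).ncard

/-- The number of negative edges of `G^π − H` incident to `x`. -/
noncomputable def negDeg (G : SimpleGraph V) (H : SimpleGraph W) (π : V ≃ W) (x : W) : ℕ :=
  (H.neighborSet x \ (G.map π.toEmbedding).neighborSet x).ncard

/-- The maximum mismatch count `MMC(π)`: the maximum degree of the mismatch graph `G^π − H`. -/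
noncomputable def MMC [Fintype W] (G : SimpleGraph V) (H : SimpleGraph W) (π : V ≃ W) : ℕ :=
  Finset.univ.sup (mismatchDeg G H π)

/-- The edit mismatch norm `μ_edit(G^π, H)`: the number of edges of the mismatch graph. -/
noncomputable def muEdit (G : SimpleGraph V) (H : SimpleGraph W) (π : V ≃ W) : ℕ :=
  (mismatchGraph G H π).edgeSet.ncard

/-- The edit distance `δ_edit(G, H)`: the minimum of `μ_edit(G^π, H)` over all bijections. -/
noncomputable def deltaEdit (G : SimpleGraph V) (H : SimpleGraph W) : ℕ :=
  ⨅ π : V ≃ W, muEdit G H π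

open Classical in
/-- The signed adjacency matrix of the mismatch graph `G^π − H`:
`+1` on positive edges, `−1` on negative edges, `0` otherwise. -/
noncomputable def signedAdj (G : SimpleGraph V) (H : SimpleGraph W) (π : V ≃ W) :
    Matrix W W ℝ := fun x y =>
  if (G.map π.toEmbedding).Adj x y ∧ ¬ H.Adj x y then 1
  else if H.Adj x y ∧ ¬ (G.map π.toEmbedding).Adj x y then -1 else 0

/-- The `ℓ_p` norm of a vector over a finite index type. -/
noncomputable def lpNorm [Fintype W] (p : ℝ) (x : W → ℝ) : ℝ :=
  (∑ i, |x i| ^ p) ^ p⁻¹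

/-- The `ℓ_p`-operator norm of a matrix: `sup_{x ≠ 0} ‖Mx‖_p / ‖x‖_p`. -/
noncomputable def lpOpNorm [Fintype W] (p : ℝ) (M : Matrix W W ℝ) : ℝ :=
  ⨆ x : {x : W → ℝ // x ≠ 0}, lpNorm p (M.mulVec x.1) / lpNorm p x.1

end MismatchDefs

/-- The graph `H_k` on vertex set `{0, 1, …, 2k−1}`: the Hamiltonian cycle
`0 − 1 − ⋯ − (2k−1) − 0` together with, for even `k`, the chords `{i, i+2}` for
`i ≡ 0, 1 (mod 4)`, and for odd `k`, the chords `{i, i−2}` for `i ≡ 2 (mod 4)`,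
`{i, i+2}` for `i ≡ 3 (mod 4)`, and `{2k−2, 1}`. -/
def Hk (k : ℕ) : SimpleGraph (Fin (2 * k)) :=
  SimpleGraph.fromRel (fun a b =>
    (b.val = a.val + 1) ∨ (a.val = 2 * k - 1 ∧ b.val = 0) ∨
    (if k % 2 = 0 then
      (a.val % 4 = 0 ∨ a.val % 4 = 1) ∧ b.val = a.val + 2
    else
      (a.val % 4 = 2 ∧ b.val = a.val - 2) ∨ (a.val % 4 = 3 ∧ b.val = a.val + 2) ∨
        (a.val = 2 * k - 2 ∧ b.val = 1)))

/-- Attach `5` new pendant leaves to every vertex satisfying `P` and `12` new pendant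
leaves to every other vertex. The leaves of `v` are `Sum.inr ⟨v, i⟩`. -/
def hatGraph {V : Type*} (G : SimpleGraph V) (P : V → Prop) [DecidablePred P] :
    SimpleGraph (V ⊕ Σ v : V, Fin (if P v then 5 else 12)) :=
  SimpleGraph.fromRel (fun a b =>
    match a, b with
    | Sum.inl u, Sum.inl v => G.Adj u v
    | Sum.inl u, Sum.inr x => u = x.1
    | _, _ => False)

/-- `σ ∈ Res(G_k, H_k)`: the bijection `σ` maps the independent set `A` onto the even
vertices `Even(2k)` (and hence its complement `B` onto the odd vertices `Odd(2k)`). -/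
def InRes {V : Type*} (k : ℕ) (A : Finset V) (σ : V ≃ Fin (2 * k)) : Prop :=
  ∀ v, v ∈ A ↔ (σ v).val % 2 = 0


/-!
The cycle edges `{x, x + 1}` of `H_k` join vertices of opposite parity, and every chord except
`{1, 2k−2}` joins vertices of equal parity. For `σ ∈ Res(G_k, H_k)` every edge of `G_k^σ` joins
vertices of opposite parity, so away from `1` and `2k−2` the common neighbours of `x` in `G_k^σ`
and `H_k` lie among `x ± 1`. Both graphs being 3-regular, the mismatch degree at `x` is
`6 − 2·#(common neighbours)`, so `MMC(σ) ≤ 2` puts both cycle edges at every such `x` into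
`G_k^σ`. Since `k ≥ 3` (a vertex of `A` has three neighbours in `B`), `1` and `2k−2` are not
consecutive, hence `σ⁻¹` traverses a Hamiltonian cycle of `G_k`. Conversely a Hamiltonian cycle
alternates between `A` and `B`; listed from a vertex of `A` it is `σ⁻¹` for such a `σ`.

A bijection changes the degree of a vertex by at most its mismatch degree. In `Ĝ_k` and `Ĥ_k`
leaves have degree `1`, vertices of `A` and `Even(2k)` degree `8` and the others degree `15`, so
a bijection with `MMC(π) ≤ 2` maps `A` onto `Even(2k)` and restricts to some `σ ∈ Res(G_k, H_k)`
whose mismatch graph is induced by that of `π`. Conversely, extending `σ` fibrewise to the leaves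
gives a bijection whose mismatch graph is that of `σ`.
-/

lemma Fin.val_add_one_eq_ite {n : ℕ} [NeZero n] (i : Fin n) :
    (i + 1).val = if i.val + 1 = n then 0 else i.val + 1 := by
  rw [Fin.val_add, Fin.val_one', Nat.add_mod_mod]
  split_ifs with h
  · rw [h, Nat.mod_self]
  · exact Nat.mod_eq_of_lt (by omega)

lemma Fin.eq_add_one_iff {n : ℕ} [NeZero n] {i j : Fin n} :
    j = i + 1 ↔ j.val = if i.val + 1 = n then 0 else i.val + 1 := by
  rw [Fin.ext_iff, Fin.val_add_one_eq_ite]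

lemma Fin.iff_val_mod_two_eq_zero_of_alternating {k : ℕ} [NeZero (2 * k)]
    {P : Fin (2 * k) → Prop} (hP : ∀ i, P (i + 1) ↔ ¬ P i) (h0 : P 0) (i : Fin (2 * k)) :
    P i ↔ i.val % 2 = 0 := by
  obtain ⟨m, hm⟩ := i
  induction m with
  | zero => exact iff_of_true h0 rfl
  | succ m ih =>
    have hsucc : (⟨m, by omega⟩ + 1 : Fin (2 * k)) = ⟨m + 1, hm⟩ := by
      rw [eq_comm, Fin.eq_add_one_iff, Fin.val_mk, Fin.val_mk, if_neg (by omega)]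
    rw [← hsucc, hP, ih (by omega), hsucc]
    show ¬m % 2 = 0 ↔ (m + 1) % 2 = 0
    omega

lemma Fin.add_one_ne_sub_one {n : ℕ} [NeZero n] (hn : 3 ≤ n) (x : Fin n) : x + 1 ≠ x - 1 := by
  intro h
  have h2 : x + 1 + 1 = x := by rw [h, sub_add_cancel]
  have := x.isLt
  have h1 := Fin.val_add_one_eq_ite x
  have h2' := Fin.val_add_one_eq_ite (x + 1)
  rw [h2] at h2'
  split_ifs at h1 h2' <;> omega

lemma Set.ncard_symmDiff_add_two_mul_ncard_inter {α : Type*} (s t : Set α)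
    (hs : s.Finite := by toFinite_tac) (ht : t.Finite := by toFinite_tac) :
    (symmDiff s t).ncard + 2 * (s ∩ t).ncard = s.ncard + t.ncard := by
  rw [Set.symmDiff_def, Set.ncard_union_eq disjoint_sdiff_sdiff hs.sdiff ht.sdiff,
    ← Set.ncard_inter_add_ncard_sdiff_eq_ncard s t hs,
    ← Set.ncard_inter_add_ncard_sdiff_eq_ncard t s ht, Set.inter_comm t s]
  ring

namespace SimpleGraph

section Maps

variable {V W : Type*}

lemma map_equiv_adj (G : SimpleGraph V) (π : V ≃ W) {x y : W} :
    (G.map π.toEmbedding).Adj x y ↔ G.Adj (π.symm x) (π.symm y) := by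
  rw [← comap_symm, comap_adj, Equiv.coe_toEmbedding]

lemma ncard_neighborSet_map_equiv (G : SimpleGraph V) (π : V ≃ W) (x : W) :
    ((G.map π.toEmbedding).neighborSet x).ncard = (G.neighborSet (π.symm x)).ncard := by
  conv_lhs => rw [← π.apply_symm_apply x]
  rw [← Equiv.coe_toEmbedding, neighborSet_map,
    Set.ncard_image_of_injective _ π.toEmbedding.injective]

end Maps

lemma IsRegularOfDegree.ncard_neighborSet {V : Type*} [Fintype V] {G : SimpleGraph V}
    [DecidableRel G.Adj] {d : ℕ} (h : G.IsRegularOfDegree d) (v : V) :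
    (G.neighborSet v).ncard = d := by
  rw [Set.ncard_eq_toFinset_card', Set.toFinset_card, card_neighborSet_eq_degree, h v]

lemma ncard_neighborSet_comap_le {V W : Type*} [Finite W] (G : SimpleGraph W) {f : V → W}
    (hf : Function.Injective f) (v : V) :
    ((G.comap f).neighborSet v).ncard ≤ (G.neighborSet (f v)).ncard := by
  rw [← Set.ncard_image_of_injective _ hf]
  exact Set.ncard_le_ncard (Set.image_subset_iff.mpr fun _ h => h)

section Hamiltonian

variable {V : Type*} [Fintype V] [DecidableEq V] {G : SimpleGraph V}

lemma isHamiltonian_iff_cycleGraph_isContained (hV : 3 ≤ Fintype.card V) :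
    G.IsHamiltonian ↔ cycleGraph (Fintype.card V) ⊑ G := by
  rw [cycleGraph_isContained_iff (by omega)]
  refine ⟨fun h => ?_, fun ⟨a, p, hp, hlen⟩ _ => ⟨a, p, ?_⟩⟩
  · obtain ⟨a, p, hp⟩ := h (by omega)
    exact ⟨a, p, hp.isCycle, hp.length_eq⟩
  · exact Walk.isHamiltonianCycle_iff_isCycle_and_length_eq.mpr ⟨hp, hlen⟩

lemma cycleGraph_adj_iff_eq_add_one {n : ℕ} [NeZero n] (hn : 3 ≤ n) {i j : Fin n} :
    (cycleGraph n).Adj i j ↔ j = i + 1 ∨ i = j + 1 := by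
  obtain ⟨m, rfl⟩ : ∃ m, n = m + 2 := ⟨n - 2, by omega⟩
  rw [cycleGraph_adj, sub_eq_iff_eq_add, sub_eq_iff_eq_add, add_comm 1, add_comm 1]
  tauto

lemma isHamiltonian_iff_exists_equiv_adj_add_one {n : ℕ} [NeZero n] (hn : 3 ≤ n)
    (hV : Fintype.card V = n) :
    G.IsHamiltonian ↔ ∃ f : Fin n ≃ V, ∀ i, G.Adj (f i) (f (i + 1)) := by
  subst hV
  rw [isHamiltonian_iff_cycleGraph_isContained hn]
  constructor
  · rintro ⟨c⟩
    have hbij : Function.Bijective c :=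
      (Fintype.bijective_iff_injective_and_card c).mpr ⟨c.injective, by simp⟩
    exact ⟨Equiv.ofBijective c hbij,
      fun i => c.toHom.map_adj ((cycleGraph_adj_iff_eq_add_one hn).mpr (Or.inl rfl))⟩
  · rintro ⟨f, hf⟩
    refine ⟨⟨⟨f, fun {i j} hij => ?_⟩, f.injective⟩⟩
    rcases (cycleGraph_adj_iff_eq_add_one hn).mp hij with rfl | rfl
    exacts [hf i, (hf j).symm]

end Hamiltonian

end SimpleGraph

section Mismatch

variable {V W : Type*} (G : SimpleGraph V) (H : SimpleGraph W) (π : V ≃ W)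

lemma mismatchGraph_adj {x y : W} :
    (mismatchGraph G H π).Adj x y ↔ ¬(G.Adj (π.symm x) (π.symm y) ↔ H.Adj x y) := by
  rw [mismatchGraph, symmDiff_def, sup_adj, sdiff_adj, sdiff_adj, map_equiv_adj]
  tauto

lemma neighborSet_mismatchGraph (x : W) :
    (mismatchGraph G H π).neighborSet x =
      symmDiff ((G.map π.toEmbedding).neighborSet x) (H.neighborSet x) := by
  ext y
  rw [Set.mem_symmDiff]
  simp only [mem_neighborSet, mismatchGraph, symmDiff_def, sup_adj, sdiff_adj]

lemma mismatchDeg_add_two_mul_ncard_inter [Finite W] (x : W) :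
    mismatchDeg G H π x +
        2 * ((G.map π.toEmbedding).neighborSet x ∩ H.neighborSet x).ncard =
      (G.neighborSet (π.symm x)).ncard + (H.neighborSet x).ncard := by
  rw [mismatchDeg, neighborSet_mismatchGraph, Set.ncard_symmDiff_add_two_mul_ncard_inter,
    ncard_neighborSet_map_equiv]

lemma ncard_neighborSet_le_add_mismatchDeg [Finite W] (x : W) :
    (G.neighborSet (π.symm x)).ncard ≤ (H.neighborSet x).ncard + mismatchDeg G H π x ∧
      (H.neighborSet x).ncard ≤ (G.neighborSet (π.symm x)).ncard + mismatchDeg G H π x := by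
  have := mismatchDeg_add_two_mul_ncard_inter G H π x
  have := Set.ncard_le_ncard (Set.inter_subset_left (s := (G.map π.toEmbedding).neighborSet x)
    (t := H.neighborSet x))
  have := Set.ncard_le_ncard (Set.inter_subset_right (s := (G.map π.toEmbedding).neighborSet x)
    (t := H.neighborSet x))
  rw [ncard_neighborSet_map_equiv] at *
  omega

variable [Fintype W]

lemma MMC_le_iff {d : ℕ} : MMC G H π ≤ d ↔ ∀ x, mismatchDeg G H π x ≤ d := by
  simp [MMC, Finset.sup_le_iff]

end Mismatch

section Hk

variable {k : ℕ} [NeZero (2 * k)]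

lemma Hk_adj_add_one (x : Fin (2 * k)) : (Hk k).Adj x (x + 1) := by
  have hx := x.isLt
  have h1 := Fin.val_add_one_eq_ite x
  simp only [Hk, SimpleGraph.fromRel_adj, ne_eq, Fin.ext_iff]
  split_ifs at h1 ⊢ <;> omega

lemma Hk_eq_of_adj_of_adj {x y z : Fin (2 * k)} (hy : (Hk k).Adj x y) (hz : (Hk k).Adj x z)
    (hy₁ : y ≠ x + 1) (hy₂ : x ≠ y + 1) (hz₁ : z ≠ x + 1) (hz₂ : x ≠ z + 1) : y = z := by
  have := x.isLt; have := y.isLt; have := z.isLt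
  rw [ne_eq, Fin.eq_add_one_iff] at hy₁ hy₂ hz₁ hz₂
  simp only [Hk, SimpleGraph.fromRel_adj, ne_eq, Fin.ext_iff] at hy hz ⊢
  split_ifs at * <;> omega

lemma Hk_ncard_neighborSet_le (x : Fin (2 * k)) : ((Hk k).neighborSet x).ncard ≤ 3 := by
  set R := (Hk k).neighborSet x \ {x + 1, x - 1}
  have hR : R.ncard ≤ 1 := (Set.ncard_le_one).mpr fun y hy z hz => by
    simp only [R, Set.mem_sdiff, Set.mem_insert_iff, Set.mem_singleton_iff, eq_sub_iff_add_eq,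
      not_or] at hy hz
    exact Hk_eq_of_adj_of_adj hy.1 hz.1 hy.2.1 (Ne.symm hy.2.2) hz.2.1 (Ne.symm hz.2.2)
  have hpair := Set.ncard_insert_le (x + 1) {x - 1}
  rw [Set.ncard_singleton] at hpair
  calc ((Hk k).neighborSet x).ncard ≤ (R ∪ {x + 1, x - 1}).ncard :=
        Set.ncard_le_ncard (Set.subset_sdiff_union _ _)
    _ ≤ R.ncard + ({x + 1, x - 1} : Set _).ncard := Set.ncard_union_le _ _
    _ ≤ 3 := by omega

lemma Hk_adj_of_val_mod_two_ne {x y : Fin (2 * k)} (h : (Hk k).Adj x y)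
    (hxy : x.val % 2 ≠ y.val % 2) : y = x + 1 ∨ x = y + 1 ∨ x.val = 1 ∨ x.val = 2 * k - 2 := by
  have := x.isLt; have := y.isLt
  rw [Fin.eq_add_one_iff, Fin.eq_add_one_iff]
  simp only [Hk, SimpleGraph.fromRel_adj, ne_eq, Fin.ext_iff] at h
  split_ifs at * <;> omega

end Hk

lemma MMC_le_two_of_adj_add_one {V : Type*} {G : SimpleGraph V} {n : ℕ} [NeZero n] (hn : 3 ≤ n)
    {H : SimpleGraph (Fin n)}
    (hH : ∀ i, H.Adj i (i + 1)) (hHdeg : ∀ x, (H.neighborSet x).ncard ≤ 3)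
    (hGdeg : ∀ v, (G.neighborSet v).ncard ≤ 3) (σ : V ≃ Fin n)
    (hσ : ∀ i, G.Adj (σ.symm i) (σ.symm (i + 1))) : MMC G H σ ≤ 2 := by
  rw [MMC_le_iff]
  intro x
  have hsub : {x + 1, x - 1} ⊆ (G.map σ.toEmbedding).neighborSet x ∩ H.neighborSet x := by
    have hG' := (hσ (x - 1)).symm
    have hH' := (hH (x - 1)).symm
    rw [sub_add_cancel] at hG' hH'
    rintro y (rfl | rfl)
    exacts [⟨(map_equiv_adj _ _).mpr (hσ x), hH x⟩, ⟨(map_equiv_adj _ _).mpr hG', hH'⟩]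
  have hinter := (Set.ncard_pair (Fin.add_one_ne_sub_one hn x)).symm.trans_le
    (Set.ncard_le_ncard hsub)
  have := mismatchDeg_add_two_mul_ncard_inter G H σ x
  have := hGdeg (σ.symm x)
  have := hHdeg x
  omega

section Res

variable {V : Type*} {G : SimpleGraph V} {A : Finset V} {k : ℕ}

lemma val_mod_two_ne_of_inRes (hbip : ∀ u v, G.Adj u v → (u ∈ A ↔ v ∉ A)) {σ : V ≃ Fin (2 * k)}
    (hσ : InRes k A σ) {x y : Fin (2 * k)} (h : (G.map σ.toEmbedding).Adj x y) :
    x.val % 2 ≠ y.val % 2 := by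
  have := hbip _ _ ((map_equiv_adj _ _).mp h)
  rw [hσ, hσ, σ.apply_symm_apply, σ.apply_symm_apply] at this
  omega

lemma adj_symm_add_one_and_sub_one_of_MMC_le_two [NeZero (2 * k)] (hk : 2 ≤ k)
    (hbip : ∀ u v, G.Adj u v → (u ∈ A ↔ v ∉ A)) (hGdeg : ∀ v, 3 ≤ (G.neighborSet v).ncard)
    {σ : V ≃ Fin (2 * k)} (hσ : InRes k A σ) (hmmc : MMC G (Hk k) σ ≤ 2) {x : Fin (2 * k)}
    (hx₁ : x.val ≠ 1) (hx₂ : x.val ≠ 2 * k - 2) :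
    G.Adj (σ.symm x) (σ.symm (x + 1)) ∧ G.Adj (σ.symm x) (σ.symm (x - 1)) := by
  have hsub : (G.map σ.toEmbedding).neighborSet x ∩ (Hk k).neighborSet x ⊆ {x + 1, x - 1} := by
    rintro y ⟨hyS, hyT⟩
    rcases Hk_adj_of_val_mod_two_ne hyT (val_mod_two_ne_of_inRes hbip hσ hyS) with h | h | h | h
    · exact Or.inl h
    · exact Or.inr (eq_sub_of_add_eq h.symm)
    · exact absurd h hx₁
    · exact absurd h hx₂
  have hpair := Set.ncard_pair (Fin.add_one_ne_sub_one (by omega) x)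
  have hT : 2 ≤ ((Hk k).neighborSet x).ncard := by
    refine hpair.symm.trans_le (Set.ncard_le_ncard ?_)
    have h' := (Hk_adj_add_one (x - 1)).symm
    rw [sub_add_cancel] at h'
    rintro y (rfl | rfl)
    exacts [Hk_adj_add_one x, h']
  have := mismatchDeg_add_two_mul_ncard_inter G (Hk k) σ x
  have := (MMC_le_iff _ _ _).mp hmmc x
  have := hGdeg (σ.symm x)
  have heq := Set.eq_of_subset_of_ncard_le hsub (by omega)
  exact ⟨(map_equiv_adj _ _).mp (heq.symm.subset (Set.mem_insert _ _)).1,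
    (map_equiv_adj _ _).mp (heq.symm.subset (Set.mem_insert_of_mem _ rfl)).1⟩

lemma adj_symm_add_one_of_MMC_le_two [NeZero (2 * k)] (hk : 3 ≤ k)
    (hbip : ∀ u v, G.Adj u v → (u ∈ A ↔ v ∉ A)) (hGdeg : ∀ v, 3 ≤ (G.neighborSet v).ncard)
    {σ : V ≃ Fin (2 * k)} (hσ : InRes k A σ) (hmmc : MMC G (Hk k) σ ≤ 2) (i : Fin (2 * k)) :
    G.Adj (σ.symm i) (σ.symm (i + 1)) := by
  by_cases hi : i.val ≠ 1 ∧ i.val ≠ 2 * k - 2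
  · exact (adj_symm_add_one_and_sub_one_of_MMC_le_two (by omega) hbip hGdeg hσ hmmc
      hi.1 hi.2).1
  · have := i.isLt
    have h1 := Fin.val_add_one_eq_ite i
    have h := (adj_symm_add_one_and_sub_one_of_MMC_le_two (x := i + 1) (by omega) hbip hGdeg hσ
      hmmc (by split_ifs at h1 <;> omega) (by split_ifs at h1 <;> omega)).2
    rw [add_sub_cancel_right] at h
    exact h.symm

variable [Fintype V] [DecidableEq V] [NeZero (2 * k)]

lemma exists_inRes_adj_add_one_of_isHamiltonian (hk : 2 ≤ k) (hcard : Fintype.card V = 2 * k)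
    (hbip : ∀ u v, G.Adj u v → (u ∈ A ↔ v ∉ A)) (hG : G.IsHamiltonian) :
    ∃ σ : V ≃ Fin (2 * k), InRes k A σ ∧ ∀ i, G.Adj (σ.symm i) (σ.symm (i + 1)) := by
  obtain ⟨f, hf⟩ := (isHamiltonian_iff_exists_equiv_adj_add_one (by omega) hcard).mp hG
  obtain ⟨g, hg, hg0⟩ : ∃ g : Fin (2 * k) ≃ V, (∀ i, G.Adj (g i) (g (i + 1))) ∧ g 0 ∈ A := by
    by_cases h0 : f 0 ∈ A
    · exact ⟨f, hf, h0⟩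
    · refine ⟨(Equiv.addRight 1).trans f, fun i => hf (i + 1), ?_⟩
      have := hbip _ _ (hf 0)
      rw [zero_add] at this
      simpa [this] using h0
  refine ⟨g.symm, fun v => ?_, by simpa using hg⟩
  have hP : ∀ i, g (i + 1) ∈ A ↔ g i ∉ A := fun i => by have := hbip _ _ (hg i); tauto
  simpa using Fin.iff_val_mod_two_eq_zero_of_alternating (P := (g · ∈ A)) hP hg0 (g.symm v)

lemma isHamiltonian_iff_exists_inRes_MMC_le_two (hk : 3 ≤ k) (hcard : Fintype.card V = 2 * k)
    (hbip : ∀ u v, G.Adj u v → (u ∈ A ↔ v ∉ A)) (hreg : ∀ v, (G.neighborSet v).ncard = 3) :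
    G.IsHamiltonian ↔ ∃ σ : V ≃ Fin (2 * k), InRes k A σ ∧ MMC G (Hk k) σ ≤ 2 := by
  constructor
  · intro hG
    obtain ⟨σ, hσ, hadj⟩ := exists_inRes_adj_add_one_of_isHamiltonian (by omega) hcard hbip hG
    exact ⟨σ, hσ, MMC_le_two_of_adj_add_one (by omega) Hk_adj_add_one Hk_ncard_neighborSet_le
      (fun v => (hreg v).le) σ hadj⟩
  · rintro ⟨σ, hσ, hmmc⟩
    refine (isHamiltonian_iff_exists_equiv_adj_add_one (by omega) hcard).mpr ⟨σ.symm, ?_⟩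
    exact adj_symm_add_one_of_MMC_le_two hk hbip (fun v => (hreg v).ge) hσ hmmc

end Res

section HatGraph

variable {V : Type*} (G : SimpleGraph V) (P : V → Prop) [DecidablePred P]

@[simp] lemma hatGraph_adj_inl_inl {u v : V} :
    (hatGraph G P).Adj (.inl u) (.inl v) ↔ G.Adj u v := by
  simp only [hatGraph, fromRel_adj, ne_eq, Sum.inl.injEq]
  exact ⟨fun ⟨_, h⟩ => h.elim id .symm, fun h => ⟨h.ne, .inl h⟩⟩

@[simp] lemma hatGraph_adj_inl_inr {u : V} {x : Σ v, Fin (if P v then 5 else 12)} :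
    (hatGraph G P).Adj (.inl u) (.inr x) ↔ u = x.1 := by
  simp [hatGraph, fromRel_adj]

@[simp] lemma hatGraph_adj_inr_inl {u : V} {x : Σ v, Fin (if P v then 5 else 12)} :
    (hatGraph G P).Adj (.inr x) (.inl u) ↔ x.1 = u := by
  simp [hatGraph, fromRel_adj, eq_comm]

@[simp] lemma hatGraph_adj_inr_inr {x y : Σ v, Fin (if P v then 5 else 12)} :
    ¬(hatGraph G P).Adj (.inr x) (.inr y) := by
  simp [hatGraph, fromRel_adj]

lemma ncard_neighborSet_hatGraph_inl [Finite V] (v : V) :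
    ((hatGraph G P).neighborSet (.inl v)).ncard =
      (G.neighborSet v).ncard + if P v then 5 else 12 := by
  have : (hatGraph G P).neighborSet (.inl v) =
      Sum.inl '' G.neighborSet v ∪ Sum.inr '' Set.range (Sigma.mk v) := by
    ext (u | ⟨u, i⟩) <;> simp [eq_comm]
  rw [this, Set.ncard_union_eq (by simp [Set.disjoint_left]),
    Set.ncard_image_of_injective _ Sum.inl_injective,
    Set.ncard_image_of_injective _ Sum.inr_injective,
    Set.ncard_range_of_injective sigma_mk_injective, Nat.card_eq_fintype_card, Fintype.card_fin]

lemma ncard_neighborSet_hatGraph_inr (x : Σ v, Fin (if P v then 5 else 12)) :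
    ((hatGraph G P).neighborSet (.inr x)).ncard = 1 := by
  have : (hatGraph G P).neighborSet (.inr x) = {.inl x.1} := by
    ext (u | y) <;> simp [eq_comm]
  rw [this, Set.ncard_singleton]

end HatGraph

section HatEquiv

variable {V W : Type*} {G : SimpleGraph V} {H : SimpleGraph W}
  {P : V → Prop} [DecidablePred P] {Q : W → Prop} [DecidablePred Q]

def hatEquiv (σ : V ≃ W) (h : ∀ v, P v ↔ Q (σ v)) :
    (V ⊕ Σ v, Fin (if P v then 5 else 12)) ≃ (W ⊕ Σ w, Fin (if Q w then 5 else 12)) :=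
  σ.sumCongr (σ.sigmaCongr fun v => finCongr (by simp only [h v]))

lemma mismatchGraph_hatGraph_hatEquiv (σ : V ≃ W) (h : ∀ v, P v ↔ Q (σ v)) :
    mismatchGraph (hatGraph G P) (hatGraph H Q) (hatEquiv σ h) =
      (mismatchGraph G H σ).map Function.Embedding.inl := by
  ext a b
  obtain ⟨a, rfl⟩ := (hatEquiv σ h).surjective a
  obtain ⟨b, rfl⟩ := (hatEquiv σ h).surjective b
  rw [mismatchGraph_adj, Equiv.symm_apply_apply, Equiv.symm_apply_apply]
  rcases a with u | ⟨u, i⟩ <;> rcases b with v | ⟨v, j⟩ <;>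
    simp [hatEquiv, Equiv.sigmaCongr, map_adj, mismatchGraph_adj]

lemma MMC_hatGraph_hatEquiv_le [Fintype W] (σ : V ≃ W) (h : ∀ v, P v ↔ Q (σ v)) :
    MMC (hatGraph G P) (hatGraph H Q) (hatEquiv σ h) ≤ MMC G H σ := by
  rw [MMC_le_iff]
  intro x
  rw [mismatchDeg, mismatchGraph_hatGraph_hatEquiv]
  rcases x with w | y
  · rw [← Function.Embedding.inl_apply, neighborSet_map,
      Set.ncard_image_of_injective _ Function.Embedding.inl.injective]
    exact (MMC_le_iff _ _ _).mp le_rfl w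
  · simp [neighborSet, map_adj]

lemma comap_inl_mismatchGraph_hatGraph
    {π : (V ⊕ Σ v, Fin (if P v then 5 else 12)) ≃ (W ⊕ Σ w, Fin (if Q w then 5 else 12))}
    {σ : V ≃ W} (hσ : ∀ v, π (.inl v) = .inl (σ v)) :
    (mismatchGraph (hatGraph G P) (hatGraph H Q) π).comap Sum.inl = mismatchGraph G H σ := by
  have hσ' : ∀ w, π.symm (.inl w) = .inl (σ.symm w) := fun w => by
    rw [Equiv.symm_apply_eq, hσ, σ.apply_symm_apply]
  ext x y
  simp [mismatchGraph_adj, hσ']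

variable [Finite V] [Fintype W]
  {π : (V ⊕ Σ v, Fin (if P v then 5 else 12)) ≃ (W ⊕ Σ w, Fin (if Q w then 5 else 12))}

lemma isLeft_iff_isLeft_apply_of_MMC_hatGraph_le_two
    (hπ : MMC (hatGraph G P) (hatGraph H Q) π ≤ 2) (a : V ⊕ Σ v, Fin (if P v then 5 else 12)) :
    a.isLeft ↔ (π a).isLeft := by
  have h₁ := ncard_neighborSet_le_add_mismatchDeg (hatGraph G P) (hatGraph H Q) π (π a)
  have h₂ := (MMC_le_iff _ _ _).mp hπ (π a)
  rw [π.symm_apply_apply] at h₁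
  rcases a with v | y <;> rcases hx : π _ with w | z <;> rw [hx] at h₁ h₂ <;>
    simp only [ncard_neighborSet_hatGraph_inl, ncard_neighborSet_hatGraph_inr] at h₁ <;>
    first | (split_ifs at h₁ <;> omega) | simp

-- With degrees at most `4`, the degrees `d + 5` and `d' + 12` in the hats differ by more than `2`.
lemma iff_of_MMC_hatGraph_le_two (hGdeg : ∀ v, (G.neighborSet v).ncard ≤ 4)
    (hHdeg : ∀ w, (H.neighborSet w).ncard ≤ 4) (hπ : MMC (hatGraph G P) (hatGraph H Q) π ≤ 2)
    {v : V} {w : W} (hvw : π (.inl v) = .inl w) : P v ↔ Q w := by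
  have h₁ := ncard_neighborSet_le_add_mismatchDeg (hatGraph G P) (hatGraph H Q) π (.inl w)
  have h₂ := (MMC_le_iff _ _ _).mp hπ (.inl w)
  rw [← hvw, π.symm_apply_apply, hvw, ncard_neighborSet_hatGraph_inl,
    ncard_neighborSet_hatGraph_inl] at h₁
  have := hGdeg v
  have := hHdeg w
  split_ifs at h₁ <;> first | tauto | (exfalso; omega)

lemma exists_MMC_le_two_of_MMC_hatGraph_le_two (hGdeg : ∀ v, (G.neighborSet v).ncard ≤ 4)
    (hHdeg : ∀ w, (H.neighborSet w).ncard ≤ 4) (hπ : MMC (hatGraph G P) (hatGraph H Q) π ≤ 2) :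
    ∃ σ : V ≃ W, (∀ v, P v ↔ Q (σ v)) ∧ MMC G H σ ≤ 2 := by
  let σ : V ≃ W := (Equiv.sumIsLeft.symm.trans
    (π.subtypeEquiv (isLeft_iff_isLeft_apply_of_MMC_hatGraph_le_two hπ))).trans Equiv.sumIsLeft
  have hσ : ∀ v, π (.inl v) = .inl (σ v) := fun v => by simp [σ]
  refine ⟨σ, fun v => iff_of_MMC_hatGraph_le_two hGdeg hHdeg hπ (hσ v),
    (MMC_le_iff _ _ _).mpr fun w => ?_⟩
  rw [mismatchDeg, ← comap_inl_mismatchGraph_hatGraph hσ]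
  exact (ncard_neighborSet_comap_le _ Sum.inl_injective w).trans ((MMC_le_iff _ _ _).mp hπ _)

end HatEquiv

theorem statement_13_general {V : Type*} [Fintype V] [DecidableEq V] (k : ℕ) (hk : 2 ≤ k)
    (G : SimpleGraph V) [DecidableRel G.Adj] (A B : Finset V)
    (hcard : Fintype.card V = 2 * k) (hA : A.card = k) (hB : B.card = k)
    (hUnion : ∀ v, v ∈ A ∨ v ∈ B)
    (hreg : G.IsRegularOfDegree 3)
    (hAind : ∀ u ∈ A, ∀ v ∈ A, ¬ G.Adj u v) (hBind : ∀ u ∈ B, ∀ v ∈ B, ¬ G.Adj u v) :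
    (G.IsHamiltonian ↔ ∃ σ : V ≃ Fin (2 * k), InRes k A σ ∧ MMC G (Hk k) σ ≤ 2) ∧
    (G.IsHamiltonian ↔
      ∃ π : (V ⊕ Σ v : V, Fin (if v ∈ A then 5 else 12)) ≃
        (Fin (2 * k) ⊕ Σ w : Fin (2 * k), Fin (if w.val % 2 = 0 then 5 else 12)),
        MMC (hatGraph G (· ∈ A)) (hatGraph (Hk k) (fun w => w.val % 2 = 0)) π ≤ 2) := by
  have hbip : ∀ u v, G.Adj u v → (u ∈ A ↔ v ∉ A) := fun u v h =>
    ⟨fun hu hv => hAind u hu v hv h, fun hv => (hUnion u).resolve_right fun hu =>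
      hBind u hu v ((hUnion v).resolve_left hv) h⟩
  have hdeg := hreg.ncard_neighborSet
  have hk3 : 3 ≤ k := by
    obtain ⟨v, hv⟩ : A.Nonempty := Finset.card_pos.mp (by omega)
    have hsub : G.neighborFinset v ⊆ B := fun u hu =>
      (hUnion u).resolve_left fun huA => hAind v hv u huA ((mem_neighborFinset _ _ _).mp hu)
    simpa [hreg v, hB] using Finset.card_le_card hsub
  have : NeZero (2 * k) := ⟨by omega⟩
  have h12 := isHamiltonian_iff_exists_inRes_MMC_le_two hk3 hcard hbip hdeg
  refine ⟨h12, h12.trans ⟨fun ⟨σ, hσ, hmmc⟩ => ?_, fun ⟨π, hπ⟩ => ?_⟩⟩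
  · have hσ' : ∀ v, v ∈ A ↔ (σ v).val % 2 = 0 := hσ
    exact ⟨hatEquiv σ hσ', (MMC_hatGraph_hatEquiv_le σ hσ').trans hmmc⟩
  · exact exists_MMC_le_two_of_MMC_hatGraph_le_two (fun v => (hdeg v).le.trans (by norm_num))
      (fun w => (Hk_ncard_neighborSet_le w).trans (by norm_num)) hπ

/-- Let `k ≥ 2` and `G` a 3-regular bipartite graph on `2k` vertices
with bipartition into independent sets `A, B` of size `k`. The following are equivalent:
(1) `G` has a Hamiltonian cycle; (2) there is `σ ∈ Res(G, H_k)` with `MMC(σ) ≤ 2`;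
(3) there is a bijection `π : V(Ĝ) ≃ V(Ĥ)` between the pendant-leaf extensions with
`MMC(π) ≤ 2` (equivalently `δ₁(Ĝ, Ĥ) = δ_{|1|}(Ĝ, Ĥ) ≤ 2`, since the `ℓ₁`-operator norm
of a mismatch equals its `MMC`). -/
theorem statement_13 {V : Type*} [Fintype V] [DecidableEq V] (k : ℕ) (hk : 2 ≤ k)
    (G : SimpleGraph V) [DecidableRel G.Adj] (A B : Finset V)
    (hcard : Fintype.card V = 2 * k) (hA : A.card = k) (hB : B.card = k)
    (hUnion : ∀ v, v ∈ A ∨ v ∈ B) (hDisj : Disjoint A B)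
    (hreg : G.IsRegularOfDegree 3)
    (hAind : ∀ u ∈ A, ∀ v ∈ A, ¬ G.Adj u v) (hBind : ∀ u ∈ B, ∀ v ∈ B, ¬ G.Adj u v) :
    (G.IsHamiltonian ↔ ∃ σ : V ≃ Fin (2 * k), InRes k A σ ∧ MMC G (Hk k) σ ≤ 2) ∧
    (G.IsHamiltonian ↔
      ∃ π : (V ⊕ Σ v : V, Fin (if v ∈ A then 5 else 12)) ≃
        (Fin (2 * k) ⊕ Σ w : Fin (2 * k), Fin (if w.val % 2 = 0 then 5 else 12)),
        MMC (hatGraph G (· ∈ A)) (hatGraph (Hk k) (fun w => w.val % 2 = 0)) π ≤ 2) :=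
  statement_13_general k hk G A B hcard hA hB hUnion hreg hAind hBind
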